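/- arXiv:2507.22162 — 3 statements merged into one kernel-verified Lean document; each statement's English description precedes it below -/
import Mathlib

section
/- Let C be the Cantor fan (the cone over the Cantor set) and L ⊆ C a Lelek fan with the same top. Then L is nowhere dense in C. -/
/-!
A point of the Cantor fan at height strictly between `0` and `1` lies inside a short segment of
its leg, and such a segment fits into any neighbourhood of the point; these points are dense.
If `L` had interior in `C`, that interior would contain an open set of such points, hence, by
density of the endpoints of `L`, an endpoint of `L` lying inside an arc contained in `L`. This is
impossible: a homeomorphism `[0,1] ≅ [a,b]` is monotone, so it sends `0` to `a` or `b`.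
-/

open Set Topology Filter

section Defs
variable {X : Type*} [TopologicalSpace X]

def IsSubcontinuum (A : Set X) : Prop := IsCompact A ∧ IsConnected A

def IsArc (A : Set X) : Prop := Nonempty (A ≃ₜ (Set.Icc (0:ℝ) 1))

def IsEndpointOfArc (A : Set X) (x : X) : Prop :=
  ∃ φ : (Set.Icc (0:ℝ) 1) ≃ₜ A, ((φ ⟨0, by norm_num⟩ : A) : X) = x

def IsArcFromTo (A : Set X) (x y : X) : Prop :=
  (x = y ∧ A = {x}) ∨ (x ≠ y ∧ IsArc A ∧ IsEndpointOfArc A x ∧ IsEndpointOfArc A y)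

def IsArcwiseConnected (K : Set X) : Prop :=
  ∀ x ∈ K, ∀ y ∈ K, x ≠ y →
    ∃ A, A ⊆ K ∧ IsArc A ∧ IsEndpointOfArc A x ∧ IsEndpointOfArc A y

def IsUnicoherent (K : Set X) : Prop :=
  ∀ A B : Set X, IsSubcontinuum A → IsSubcontinuum B → A ∪ B = K → IsConnected (A ∩ B)

def IsDendroid (K : Set X) : Prop :=
  IsSubcontinuum K ∧ IsArcwiseConnected K ∧
    ∀ A, A ⊆ K → IsSubcontinuum A → IsUnicoherent A

def triodModel : Set (ℝ × ℝ) := (Set.Icc (-1) 1 ×ˢ ({0} : Set ℝ)) ∪ (({0} : Set ℝ) ×ˢ Set.Icc 0 1)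

lemma triod_top_mem : ((0, 0) : ℝ × ℝ) ∈ triodModel := by
  left; exact ⟨by norm_num, rfl⟩

def IsSimpleTriodWithTop (T : Set X) (x : X) : Prop :=
  ∃ φ : triodModel ≃ₜ T, ((φ ⟨(0, 0), triod_top_mem⟩ : T) : X) = x

def IsRamificationPoint (K : Set X) (x : X) : Prop :=
  x ∈ K ∧ ∃ T, T ⊆ K ∧ IsSimpleTriodWithTop T x

def IsEndpoint (K : Set X) (x : X) : Prop :=
  x ∈ K ∧ ∀ A, A ⊆ K → IsArc A → x ∈ A → IsEndpointOfArc A x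

def IsFan (K : Set X) : Prop :=
  IsDendroid K ∧ ∀ x y, IsRamificationPoint K x → IsRamificationPoint K y → x = y

def IsFanWithTop (K : Set X) (v : X) : Prop := IsFan K ∧ IsRamificationPoint K v

def Legs (K : Set X) (v : X) : Set (Set X) :=
  {A | ∃ e, IsEndpoint K e ∧ A ⊆ K ∧ IsArcFromTo A v e}

def IsRetractOf (B A : Set X) : Prop :=
  ∃ r : X → X, ContinuousOn r A ∧ Set.MapsTo r A B ∧ Set.EqOn r id B

end Defs

section MetricDefs
variable {X : Type*} [MetricSpace X]

def IsSmoothFan (K : Set X) (v : X) : Prop :=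
  IsFanWithTop K v ∧
  ∀ x ∈ K, ∀ xs : ℕ → X, (∀ n, xs n ∈ K) → Tendsto xs atTop (nhds x) →
    ∀ A : Set X, A ⊆ K → IsArcFromTo A v x →
    ∀ As : ℕ → Set X, (∀ n, As n ⊆ K ∧ IsArcFromTo (As n) v (xs n)) →
      Tendsto (fun n => Metric.hausdorffDist (As n) A) atTop (nhds 0)

def IsLelekFan (K : Set X) (v : X) : Prop :=
  IsSmoothFan K v ∧ K ⊆ closure {x | IsEndpoint K x}

def IsWedge (L : Set X) (v : X) (W : Set X) : Prop :=
  W ⊆ L ∧ IsSubcontinuum W ∧ IsLelekFan W v ∧ IsLelekFan ((L \ W) ∪ {v}) v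

end MetricDefs

def coneSetoid (Z : Type*) : Setoid (Z × Set.Icc (0:ℝ) 1) where
  r a b := a = b ∨ ((a.2 : ℝ) = 0 ∧ (b.2 : ℝ) = 0)
  iseqv := by
    refine ⟨fun a => Or.inl rfl, ?_, ?_⟩
    · rintro a b (rfl | h)
      · exact Or.inl rfl
      · exact Or.inr ⟨h.2, h.1⟩
    · rintro a b c (rfl | h) (rfl | h')
      · exact Or.inl rfl
      · exact Or.inr h'
      · exact Or.inr h
      · exact Or.inr ⟨h.1, h'.2⟩

abbrev CantorFanSpace : Type := Quotient (coneSetoid (ℕ → Bool))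

def IsCantorFan {X : Type*} [TopologicalSpace X] (K : Set X) (v : X) : Prop :=
  IsFanWithTop K v ∧ Nonempty (K ≃ₜ CantorFanSpace)

def IsConfluent {X Y : Type*} [TopologicalSpace X] [TopologicalSpace Y] (f : X → Y) : Prop :=
  ∀ Q : Set Y, Q ⊆ Set.range f → IsCompact Q → IsConnected Q →
    ∀ x ∈ f ⁻¹' Q, f '' connectedComponentIn (f ⁻¹' Q) x = Q


open Function

section Arcs
variable {X Y : Type*} [TopologicalSpace X] [TopologicalSpace Y]

def IsArcInteriorPoint (S : Set X) (x : X) : Prop :=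
  ∃ (a b : ℝ) (Φ : ℝ → X), ContinuousOn Φ (Icc a b) ∧ InjOn Φ (Icc a b) ∧
    Φ '' Icc a b ⊆ S ∧ x ∈ Φ '' Ioo a b

lemma IsArcInteriorPoint.mono {S T : Set X} {x : X} (h : IsArcInteriorPoint S x) (hST : S ⊆ T) :
    IsArcInteriorPoint T x :=
  let ⟨a, b, Φ, hc, hi, hS, hx⟩ := h
  ⟨a, b, Φ, hc, hi, hS.trans hST, hx⟩

lemma IsArcInteriorPoint.image {S : Set X} {x : X} (h : IsArcInteriorPoint S x) {f : X → Y}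
    (hf : Continuous f) (hinj : Injective f) : IsArcInteriorPoint (f '' S) (f x) := by
  obtain ⟨a, b, Φ, hc, hi, hS, hx⟩ := h
  refine ⟨a, b, f ∘ Φ, hf.comp_continuousOn hc, hinj.comp_injOn hi, ?_, ?_⟩
  · rw [image_comp]; exact image_mono hS
  · rw [image_comp]; exact mem_image_of_mem f hx

lemma Icc_homeomorph_apply_zero {a b : ℝ} (G : Icc (0:ℝ) 1 ≃ₜ Icc a b) :
    (G ⟨0, by norm_num⟩ : ℝ) = a ∨ (G ⟨0, by norm_num⟩ : ℝ) = b := by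
  have hab : a ≤ b := (G ⟨0, by norm_num⟩).2.1.trans (G ⟨0, by norm_num⟩).2.2
  rcases (continuous_subtype_val.comp G.continuous).strictMono_of_inj
    (Subtype.val_injective.comp G.injective) with hmono | hanti
  · left
    refine le_antisymm ?_ (G _).2.1
    calc (G ⟨0, by norm_num⟩ : ℝ) ≤ G (G.symm ⟨a, left_mem_Icc.2 hab⟩) :=
          hmono.monotone (G.symm _).2.1
      _ = a := by rw [G.apply_symm_apply]
  · right
    refine le_antisymm (G _).2.2 ?_
    calc b = G (G.symm ⟨b, right_mem_Icc.2 hab⟩) := by rw [G.apply_symm_apply]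
      _ ≤ G ⟨0, by norm_num⟩ := hanti.antitone (G.symm _).2.1

lemma IsEndpoint.not_isArcInteriorPoint [T2Space X] {K : Set X} {x : X} (hx : IsEndpoint K x) :
    ¬ IsArcInteriorPoint K x := by
  rintro ⟨a, b, Φ, hc, hi, hK, t, ht, rfl⟩
  have hab : a < b := ht.1.trans ht.2
  let H := ((hc.domRestrict.isClosedEmbedding hi.injective).isEmbedding.toHomeomorph).trans
    (Homeomorph.setCongr (range_domRestrict Φ (Icc a b)))
  have harc : IsArc (Φ '' Icc a b) := ⟨H.symm.trans (iccHomeoI a b hab)⟩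
  obtain ⟨χ, hχ⟩ := hx.2 _ hK harc (mem_image_of_mem Φ (Ioo_subset_Icc_self ht))
  have hG : χ.trans H.symm ⟨0, by norm_num⟩ = ⟨t, Ioo_subset_Icc_self ht⟩ :=
    H.symm_apply_eq.2 (Subtype.ext hχ)
  rcases Icc_homeomorph_apply_zero (χ.trans H.symm) with h | h <;> rw [hG] at h
  · exact ht.1.ne' h
  · exact ht.2.ne h

end Arcs

section Cone
variable {Z : Type*}

def coneHeight : Quotient (coneSetoid Z) → ℝ :=
  Quotient.lift (fun p => (p.2 : ℝ)) (by rintro a b (rfl | ⟨ha, hb⟩) <;> simp_all)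

lemma continuous_coneHeight [TopologicalSpace Z] :
    Continuous (coneHeight : Quotient (coneSetoid Z) → ℝ) :=
  (continuous_subtype_val.comp continuous_snd).quotient_lift _

noncomputable def coneRay (s : Z) (r : ℝ) : Quotient (coneSetoid Z) :=
  Quotient.mk _ (s, projIcc 0 1 zero_le_one r)

lemma continuous_coneRay [TopologicalSpace Z] (s : Z) : Continuous (coneRay s) :=
  continuous_quotient_mk'.comp (continuous_const.prodMk continuous_projIcc)

lemma coneHeight_coneRay {s : Z} {r : ℝ} (hr : r ∈ Icc (0:ℝ) 1) :
    coneHeight (coneRay s r) = r :=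
  congrArg Subtype.val (projIcc_of_mem zero_le_one hr)

lemma exists_coneRay_eq (p : Quotient (coneSetoid Z)) :
    ∃ s, ∃ t ∈ Icc (0:ℝ) 1, coneRay s t = p := by
  induction p using Quotient.ind with
  | _ p => exact ⟨p.1, p.2, p.2.2, by simp [coneRay, projIcc_val]⟩

lemma dense_coneHeight_preimage_Ioo [TopologicalSpace Z] :
    Dense (coneHeight ⁻¹' Ioo 0 1 : Set (Quotient (coneSetoid Z))) := by
  refine dense_iff_inter_open.2 fun U hU ⟨p, hp⟩ => ?_
  obtain ⟨s, t, ht, rfl⟩ := exists_coneRay_eq p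
  have ht' : t ∈ closure (Ioo (0:ℝ) 1) := by rwa [closure_Ioo zero_ne_one]
  obtain ⟨r, hrU, hr⟩ := mem_closure_iff.1 ht' _ (hU.preimage (continuous_coneRay s)) hp
  exact ⟨coneRay s r, hrU, by rwa [mem_preimage, coneHeight_coneRay (Ioo_subset_Icc_self hr)]⟩

lemma isArcInteriorPoint_of_coneHeight_mem_Ioo [TopologicalSpace Z] {p : Quotient (coneSetoid Z)}
    (hp : coneHeight p ∈ Ioo 0 1) {U : Set (Quotient (coneSetoid Z))} (hU : U ∈ 𝓝 p) :
    IsArcInteriorPoint U p := by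
  obtain ⟨s, t, ht, rfl⟩ := exists_coneRay_eq p
  rw [coneHeight_coneRay ht] at hp
  have hnhds : coneRay s ⁻¹' U ∩ Ioo 0 1 ∈ 𝓝 t :=
    inter_mem ((continuous_coneRay s).continuousAt.preimage_mem_nhds hU) (isOpen_Ioo.mem_nhds hp)
  obtain ⟨ε, hε, hball⟩ := Metric.mem_nhds_iff.1 hnhds
  have hIcc : Icc (t - ε / 2) (t + ε / 2) ⊆ coneRay s ⁻¹' U ∩ Ioo 0 1 := fun r hr =>
    hball (by rw [Real.ball_eq_Ioo]; constructor <;> linarith [hr.1, hr.2])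
  refine ⟨t - ε / 2, t + ε / 2, coneRay s, (continuous_coneRay s).continuousOn, ?_, ?_,
    t, ⟨by linarith, by linarith⟩, rfl⟩
  · intro r hr r' hr' h
    have hI : ∀ {r}, r ∈ Icc (t - ε / 2) (t + ε / 2) → r ∈ Icc (0:ℝ) 1 :=
      fun hr => Ioo_subset_Icc_self (hIcc hr).2
    rw [← coneHeight_coneRay (s := s) (hI hr), h, coneHeight_coneRay (hI hr')]
  · exact image_subset_iff.2 fun r hr => (hIcc hr).1

end Cone

/-- a Lelek fan `L` contained in a Cantor fan `C` (same top `v`)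
is nowhere dense in `C`. -/
theorem stmt4 {X : Type*} [MetricSpace X] (C L : Set X) (v : X)
    (hC : IsCantorFan C v) (hL : IsLelekFan L v) (hsub : L ⊆ C) :
    IsNowhereDense ((Subtype.val ⁻¹' L : Set C)) := by
  obtain ⟨e⟩ := hC.2
  have hclosed : IsClosed (Subtype.val ⁻¹' L : Set C) :=
    hL.1.1.1.1.1.1.isClosed.preimage continuous_subtype_val
  rw [hclosed.isNowhereDense_iff, ← not_nonempty_iff_eq_empty]
  intro hint
  set O := interior (Subtype.val ⁻¹' L : Set C) ∩ e ⁻¹' (coneHeight ⁻¹' Ioo 0 1)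
  have hO : IsOpen O :=
    isOpen_interior.inter ((isOpen_Ioo.preimage continuous_coneHeight).preimage e.continuous)
  obtain ⟨p, hpO⟩ : O.Nonempty :=
    (dense_coneHeight_preimage_Ioo.preimage e.isOpenMap).inter_open_nonempty _ isOpen_interior hint
  obtain ⟨V, hV, hVO⟩ := isOpen_induced_iff.1 hO
  have hpL : p ∈ (Subtype.val ⁻¹' L : Set C) := interior_subset hpO.1
  obtain ⟨x, hxV, hx⟩ :=
    mem_closure_iff.1 (hL.2 hpL) V hV (show p ∈ Subtype.val ⁻¹' V from hVO ▸ hpO)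
  obtain ⟨hxL, hxD⟩ : (⟨x, hsub hx.1⟩ : C) ∈ O := hVO ▸ hxV
  have harc := (isArcInteriorPoint_of_coneHeight_mem_Ioo hxD
    ((e.isOpenMap _ isOpen_interior).mem_nhds (mem_image_of_mem e hxL))).image
    (continuous_subtype_val.comp e.symm.continuous) (Subtype.val_injective.comp e.symm.injective)
  simp only [comp_apply, Homeomorph.symm_apply_apply, ← image_comp] at harc
  refine hx.not_isArcInteriorPoint (harc.mono ?_)
  rintro _ ⟨c, hc, rfl⟩
  simpa using interior_subset hc
end

section
/- Let L be a Lelek fan and C ⊆ L a Cantor fan with the same top. Then C is nowhere dense in L. -/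
open Set Topology Filter

/-! If `C` had interior in `L`, some open `V` meeting `L` would satisfy `V ∩ L ⊆ C`.
Endpoints of `L` are dense in `L`, and those lying in `V` are endpoints of `C`. In the cone over
the Cantor set every point of height strictly between `0` and `1` is interior to an arc along its
leg, so endpoints of `C` sit at height `0` or `1`. Hence `V ∩ C` lies in the closed set of points
of height `0` or `1`, which has empty interior in the cone. -/

open Function unitInterval

lemma unitInterval.homeomorph_zero_eq_zero_or_eq_one (f : I ≃ₜ I) : f 0 = 0 ∨ f 0 = 1 := by
  obtain ⟨a, ha⟩ := f.surjective 0
  obtain ⟨b, hb⟩ := f.surjective 1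
  rcases f.continuous.strictMono_of_inj_boundedOrder' f.injective with hf | hf
  · exact Or.inl (le_antisymm ((hf.monotone (nonneg' : 0 ≤ a)).trans_eq ha) nonneg')
  · exact Or.inr (le_antisymm le_one' (hb.symm.trans_le (hf.antitone (nonneg' : 0 ≤ b))))

section Endpoints

variable {X : Type*} [TopologicalSpace X]

lemma IsEndpoint.of_subset {K L : Set X} {e : X} (he : IsEndpoint L e) (hKL : K ⊆ L)
    (heK : e ∈ K) : IsEndpoint K e :=
  ⟨heK, fun A hAK => he.2 A (hAK.trans hKL)⟩

lemma IsEndpoint.eq_zero_or_eq_one [T2Space X] {K : Set X} {e : X} (he : IsEndpoint K e)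
    {g : I → X} (hg : Continuous g) (hg_inj : Injective g) (hgK : range g ⊆ K) {t : I}
    (hgt : g t = e) : t = 0 ∨ t = 1 := by
  have hemb := (hg.isClosedEmbedding hg_inj).isEmbedding
  obtain ⟨ψ, hψ⟩ := he.2 (range g) hgK ⟨hemb.toHomeomorph.symm⟩ ⟨t, hgt⟩
  have hψt : (ψ.trans hemb.toHomeomorph.symm) 0 = t := by
    rw [Homeomorph.trans_apply, ← hemb.toHomeomorph_symm_apply t]
    exact congrArg _ (Subtype.ext (hψ.trans hgt.symm))
  simpa [hψt] using homeomorph_zero_eq_zero_or_eq_one (ψ.trans hemb.toHomeomorph.symm)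

end Endpoints

namespace CantorFanSpace

def mk (z : ℕ → Bool) (t : I) : CantorFanSpace := Quotient.mk _ (z, t)

lemma mk_eq_mk_iff {z z' : ℕ → Bool} {s t : I} :
    mk z s = mk z' t ↔ (z = z' ∧ s = t) ∨ (s = 0 ∧ t = 0) := by
  rw [mk, mk, Quotient.eq]
  change (z, s) = (z', t) ∨ ((s : ℝ) = 0 ∧ (t : ℝ) = 0) ↔ _
  simp only [Prod.mk.injEq, Icc.coe_eq_zero]

lemma continuous_uncurry_mk : Continuous (uncurry mk) := continuous_quot_mk

lemma surjective_uncurry_mk : Surjective (uncurry mk) := Quot.mk_surjective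

lemma continuous_mk (z : ℕ → Bool) : Continuous (mk z) :=
  continuous_uncurry_mk.comp (Continuous.prodMk_right z)

lemma injective_mk (z : ℕ → Bool) : Injective (mk z) := fun s t h => by
  rcases mk_eq_mk_iff.1 h with h | h
  exacts [h.2, h.1.trans h.2.symm]

/-- The vertex of the fan together with the tops of its legs. -/
def ends : Set CantorFanSpace := uncurry mk '' (univ ×ˢ {0, 1})

lemma isCompact_ends : IsCompact ends :=
  (isCompact_univ.prod (toFinite _).isCompact).image continuous_uncurry_mk

lemma mk_mem_ends_iff {z : ℕ → Bool} {t : I} : mk z t ∈ ends ↔ t = 0 ∨ t = 1 := by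
  constructor
  · rintro ⟨⟨z', t'⟩, ⟨-, ht'⟩, h⟩
    rcases mk_eq_mk_iff.1 h with h | h
    · rwa [← h.2]
    · exact Or.inl h.2
  · exact fun ht => ⟨(z, t), ⟨trivial, ht⟩, rfl⟩

lemma interior_ends : interior ends = ∅ := by
  have hdense : Dense (Ioo (0 : I) 1) := by
    simp [dense_iff_closure_eq, closure_Ioo zero_ne_one, univ_eq_Icc]
  refine interior_eq_empty_iff_dense_compl.2 (Dense.mono ?_ <|
    surjective_uncurry_mk.denseRange.dense_image continuous_uncurry_mk (dense_univ.prod hdense))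
  rintro _ ⟨⟨z, t⟩, ⟨-, ht⟩, rfl⟩ hends
  rcases mk_mem_ends_iff.1 hends with rfl | rfl
  exacts [ht.1.ne rfl, ht.2.ne rfl]

lemma mem_ends_of_isEndpoint {X : Type*} [TopologicalSpace X] [T2Space X] {C : Set X}
    (h : C ≃ₜ CantorFanSpace) {e : X} (heC : e ∈ C) (he : IsEndpoint C e) :
    h ⟨e, heC⟩ ∈ ends := by
  obtain ⟨⟨z, t⟩, hzt⟩ := surjective_uncurry_mk (h ⟨e, heC⟩)
  change mk z t = _ at hzt
  rw [← hzt, mk_mem_ends_iff]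
  refine he.eq_zero_or_eq_one (g := fun s => (h.symm (mk z s) : X))
    (continuous_subtype_val.comp (h.symm.continuous.comp (continuous_mk z)))
    (Subtype.val_injective.comp (h.symm.injective.comp (injective_mk z)))
    (range_subset_iff.2 fun s => (h.symm (mk z s)).2) ?_
  simp [hzt]

end CantorFanSpace

/-- a Cantor fan `C` contained in a Lelek fan `L` (same top `v`)
is nowhere dense in `L`. -/
theorem stmt5 {X : Type*} [MetricSpace X] (L C : Set X) (v : X)
    (hL : IsLelekFan L v) (hC : IsCantorFan C v) (hsub : C ⊆ L) :
    IsNowhereDense ((Subtype.val ⁻¹' C : Set L)) := by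
  obtain ⟨h⟩ := hC.2
  set R : Set X := Subtype.val '' (h ⁻¹' CantorFanSpace.ends)
  have hRclosed : IsClosed R :=
    ((h.isCompact_preimage.2 CantorFanSpace.isCompact_ends).image continuous_subtype_val).isClosed
  have hCclosed : IsClosed C := hC.1.1.1.1.1.isClosed
  rw [(hCclosed.preimage continuous_subtype_val).isNowhereDense_iff, eq_empty_iff_forall_notMem]
  intro x hx
  obtain ⟨W, hWC, hWopen, hxW⟩ := mem_interior.1 hx
  obtain ⟨V, hVopen, rfl⟩ := isOpen_induced_iff.1 hWopen
  have hVC : V ∩ L ⊆ C := fun y hy => hWC (show (⟨y, hy.2⟩ : L) ∈ Subtype.val ⁻¹' V from hy.1)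
  have hendsR : V ∩ {e | IsEndpoint L e} ⊆ R := by
    rintro e ⟨heV, he⟩
    have heC : e ∈ C := hVC ⟨heV, he.1⟩
    exact ⟨⟨e, heC⟩, CantorFanSpace.mem_ends_of_isEndpoint h heC (he.of_subset hsub heC), rfl⟩
  have hVR : V ∩ C ⊆ R := fun c hc =>
    closure_minimal hendsR hRclosed (hVopen.inter_closure ⟨hc.1, hL.2 (hsub hc.2)⟩)
  have hO : h '' (Subtype.val ⁻¹' V) ⊆ CantorFanSpace.ends := by
    rintro _ ⟨c, hcV, rfl⟩
    exact Subtype.val_injective.mem_set_image.1 (hVR ⟨hcV, c.2⟩)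
  have hOint := interior_maximal hO (h.isOpenMap _ (hVopen.preimage continuous_subtype_val))
  rw [CantorFanSpace.interior_ends] at hOint
  have hxC : (⟨(x : X), hVC ⟨hxW, x.2⟩⟩ : C) ∈ Subtype.val ⁻¹' V := hxW
  exact hOint (mem_image_of_mem h hxC)
end

section
/- Let C = (Y × [0,1])/∼ be the cone over a Cantor set Y (where ∼ collapses Y × {0} to the top v), q : Y × [0,1] → C the quotient map, and let J, K be fans in C with K ⊆ J. Let r : J → K be a retraction. Then r is simple (i.e., r(A) ⊆ A for each leg A of J) if and only if there is a retraction R : F_J → F_K, where F_J = q⁻¹(J) and F_K = q⁻¹(K), such that q(R(x)) = r(q(x)) for all x ∈ F_J. -/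
open Set Topology Filter

/-- The fence `F = Y × [0,1]` over the Cantor set `Y = ℕ → Bool`. -/
abbrev Fence : Type := (ℕ → Bool) × Set.Icc (0:ℝ) 1

/-- The quotient map `q : F → C` onto the Cantor fan `C = F/∼`. -/
def q : Fence → CantorFanSpace := Quotient.mk (coneSetoid (ℕ → Bool))

/-- The top `v` of the Cantor fan `C`. -/
def vtop : CantorFanSpace := q ((fun _ => false), ⟨0, by norm_num⟩)

/-- The fence `F_K = q⁻¹(K)` of a subset `K` of the Cantor fan. -/
def FFence (K : Set CantorFanSpace) : Set Fence := q ⁻¹' K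

/-- The fence `H_K = Cl_F(q⁻¹(K \ {v}))` of a subset `K` of the Cantor fan. -/
def HFence (K : Set CantorFanSpace) : Set Fence := closure (q ⁻¹' (K \ {vtop}))

/-!
Off the top, every point of the Cantor fan lies on a unique thread `q ({x} × (0,1])`, and a
preconnected set avoiding the top stays on one thread. Hence the legs of a fan `J ⊆ C` are the
segments `q ({x} × [0,m])` where `m` is the largest height at which the thread `x` meets `J`.
A simple retraction keeps every point on its thread, so `R (x,t) = (x, height (r (q (x,t))))`
lifts it. Conversely, the Cantor coordinate of a lift `R` is constant along the connected segment
`{x} × [0,t]` and `R` fixes `(x,0)`, so `r` moves points along their thread; as the endpoint of a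
leg is the highest point of `J` on its thread, `r` maps the leg into itself.
-/

open Function unitInterval

section Arc

variable {X : Type*} [TopologicalSpace X]

lemma IsArc.exists_param {A : Set X} (h : IsArc A) :
    ∃ f : I → X, Continuous f ∧ Injective f ∧ range f = A := by
  obtain ⟨φ⟩ := h
  refine ⟨Subtype.val ∘ φ.symm, continuous_subtype_val.comp φ.symm.continuous,
    Subtype.val_injective.comp φ.symm.injective, ?_⟩
  rw [range_comp, φ.symm.range_coe, image_univ, Subtype.range_coe]

lemma IsEndpointOfArc.exists_param {A : Set X} {a : X} (h : IsEndpointOfArc A a) :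
    ∃ f : I → X, Continuous f ∧ Injective f ∧ range f = A ∧ f 0 = a := by
  obtain ⟨φ, rfl⟩ := h
  refine ⟨Subtype.val ∘ φ, continuous_subtype_val.comp φ.continuous,
    Subtype.val_injective.comp φ.injective, ?_, rfl⟩
  rw [range_comp, φ.range_coe, image_univ, Subtype.range_coe]

lemma IsEndpointOfArc.mem {A : Set X} {a : X} (h : IsEndpointOfArc A a) : a ∈ A := by
  obtain ⟨φ, rfl⟩ := h
  exact (φ _).2

lemma IsEndpointOfArc.isPreconnected {A : Set X} {a : X} (h : IsEndpointOfArc A a) :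
    IsPreconnected A := by
  obtain ⟨f, hf, -, rfl, -⟩ := h.exists_param
  exact isPreconnected_range hf

lemma IsEndpointOfArc.isPreconnected_diff {A : Set X} {a : X} (h : IsEndpointOfArc A a) :
    IsPreconnected (A \ {a}) := by
  obtain ⟨f, hf, hinj, rfl, rfl⟩ := h.exists_param
  have : range f \ {f 0} = f '' Ioi 0 := by
    ext c
    simp only [Set.mem_sdiff, mem_range, mem_singleton_iff, mem_image, mem_Ioi,
      unitInterval.pos_iff_ne_zero]
    constructor
    · rintro ⟨⟨w, rfl⟩, hw⟩
      exact ⟨w, fun h => hw (h ▸ rfl), rfl⟩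
    · rintro ⟨w, hw, rfl⟩
      exact ⟨⟨w, rfl⟩, fun h => hw (hinj h)⟩
  rw [this]
  exact isPreconnected_Ioi.image f hf.continuousOn

variable [T2Space X] {f : I → X}

lemma isArc_range (hf : Continuous f) (hinj : Injective f) : IsArc (range f) :=
  ⟨(hf.subtype_mk mem_range_self |>.homeoOfEquivCompactToT2 (f := .ofInjective f hinj)).symm⟩

lemma isEndpointOfArc_range_zero (hf : Continuous f) (hinj : Injective f) :
    IsEndpointOfArc (range f) (f 0) :=
  ⟨hf.subtype_mk mem_range_self |>.homeoOfEquivCompactToT2 (f := .ofInjective f hinj), rfl⟩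

lemma isEndpointOfArc_range_one (hf : Continuous f) (hinj : Injective f) :
    IsEndpointOfArc (range f) (f 1) := by
  have h := isEndpointOfArc_range_zero (hf.comp continuous_symm) (hinj.comp symm_bijective.injective)
  rwa [symm_bijective.surjective.range_comp, comp_apply, symm_zero] at h

end Arc

lemma fst_eq_of_continuousOn {Y Z : Type*} [TopologicalSpace Y] [TotallyDisconnectedSpace Y]
    [TopologicalSpace Z] {R : Y × I → Y × Z} {S : Set (Y × I)} (hR : ContinuousOn R S) {y : Y}
    {u : I} (hS : ∀ w ≤ u, (y, w) ∈ S) (h0 : (R (y, 0)).1 = y) : (R (y, u)).1 = y := by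
  have hpath : Continuous fun w : I => (y, u * w) := by fun_prop
  have hfst : ContinuousOn (fun w : I => (R (y, u * w)).1) univ :=
    (hR.comp hpath.continuousOn fun w _ => hS _ mul_le_left).fst
  have hconst := (isPreconnected_univ.image _ hfst).subsingleton
    ⟨1, trivial, rfl⟩ ⟨0, trivial, rfl⟩
  simpa only [mul_one, mul_zero, h0] using hconst

lemma Bool.toNat_cast_injective : Injective fun b : Bool => (b.toNat : ℝ) := by
  intro a b
  cases a <;> cases b <;> simp

namespace CantorFan

lemma continuous_q : Continuous q := continuous_quot_mk

lemma q_surjective : Surjective q := Quotient.mk_surjective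

lemma q_eq_q_iff {a b : Fence} : q a = q b ↔ a = b ∨ (a.2 = 0 ∧ b.2 = 0) := by
  simp only [← Set.Icc.coe_eq_zero]
  exact Quotient.eq

lemma q_eq_vtop_iff {p : Fence} : q p = vtop ↔ p.2 = 0 := by
  change q p = q (_, 0) ↔ _
  rw [q_eq_q_iff]
  constructor
  · rintro (rfl | ⟨h, -⟩)
    exacts [rfl, h]
  · exact fun h => Or.inr ⟨h, rfl⟩

lemma q_zero (x : ℕ → Bool) : q (x, 0) = vtop := q_eq_vtop_iff.2 rfl

def height : CantorFanSpace → I :=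
  Quotient.lift Prod.snd fun _ _ h => h.elim (congrArg _) fun h => Subtype.ext (h.1.trans h.2.symm)

@[simp] lemma height_q (p : Fence) : height (q p) = p.2 := rfl

lemma continuous_height : Continuous height := continuous_quot_lift _ continuous_snd

lemma height_eq_zero_iff {c : CantorFanSpace} : height c = 0 ↔ c = vtop := by
  obtain ⟨p, rfl⟩ := q_surjective c
  exact q_eq_vtop_iff.symm

/-- Together with `height`, these coordinates embed the Cantor fan into `ℝ × ℝ^ℕ`; off the top,
`coord n / height` reads off the `n`-th digit of the thread. -/
def coord (n : ℕ) : CantorFanSpace → ℝ :=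
  Quotient.lift (fun p : Fence => (p.2 : ℝ) * (p.1 n).toNat) (by
    rintro a b (rfl | ⟨h₁, h₂⟩)
    · rfl
    · simp only [h₁, h₂, zero_mul])

@[simp] lemma coord_q (n : ℕ) (p : Fence) : coord n (q p) = (p.2 : ℝ) * (p.1 n).toNat := rfl

lemma continuous_coord (n : ℕ) : Continuous (coord n) :=
  continuous_quot_lift _ <| (continuous_subtype_val.comp continuous_snd).mul <|
    (continuous_of_discreteTopology (f := fun b : Bool => (b.toNat : ℝ))).comp
      ((continuous_apply n).comp continuous_fst)

lemma injective_height_coord : Injective fun c => (height c, fun n => coord n c) := by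
  intro c d hcd
  obtain ⟨⟨x, t⟩, rfl⟩ := q_surjective c
  obtain ⟨⟨y, s⟩, rfl⟩ := q_surjective d
  simp only [height_q, coord_q, Prod.mk.injEq, funext_iff] at hcd
  obtain ⟨rfl, hxy⟩ := hcd
  refine q_eq_q_iff.2 (or_iff_not_imp_right.2 fun ht => ?_)
  have ht : (t : ℝ) ≠ 0 := coe_ne_zero.2 fun h => ht ⟨h, h⟩
  refine Prod.ext (funext fun n => ?_) rfl
  change x n = y n
  exact Bool.toNat_cast_injective (mul_left_cancel₀ ht (hxy n))

instance : T2Space CantorFanSpace :=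
  .of_injective_continuous injective_height_coord <|
    continuous_height.prodMk (continuous_pi continuous_coord)

lemma eq_q_height_of_isPreconnected {S : Set CantorFanSpace} (hS : IsPreconnected S)
    (hv : vtop ∉ S) {x : ℕ → Bool} {t : I} (hx : q (x, t) ∈ S) {c : CantorFanSpace} (hc : c ∈ S) :
    c = q (x, height c) := by
  obtain ⟨⟨y, s⟩, rfl⟩ := q_surjective c
  suffices x = y by rw [this]; rfl
  have hS0 : ∀ c ∈ S, (height c : ℝ) ≠ 0 :=
    fun c hc h => hv (height_eq_zero_iff.1 (Set.Icc.coe_eq_zero.1 h) ▸ hc)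
  funext n
  have hratio : ∀ p : Fence, q p ∈ S → coord n (q p) / height (q p) = (p.1 n).toNat :=
    fun p hp => mul_div_cancel_left₀ _ (hS0 _ hp)
  have hconst := hS.constant_of_mapsTo (f := fun c => coord n c / height c)
    (finite_range fun b : Bool => (b.toNat : ℝ)).isDiscrete
    ((continuous_coord n).continuousOn.div
      (continuous_subtype_val.comp continuous_height).continuousOn hS0)
    (fun c hc => by obtain ⟨p, rfl⟩ := q_surjective c; exact ⟨_, (hratio p hc).symm⟩) hx hc
  rw [hratio _ hx, hratio _ hc] at hconst
  exact Bool.toNat_cast_injective hconst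

def threadSegment (x : ℕ → Bool) (m : I) : Set CantorFanSpace := (fun u => q (x, u)) '' Iic m

variable {x : ℕ → Bool} {t m : I}

lemma q_mem_threadSegment {u : I} (h : u ≤ m) : q (x, u) ∈ threadSegment x m := ⟨u, h, rfl⟩

lemma vtop_mem_threadSegment : vtop ∈ threadSegment x m := ⟨0, nonneg', q_zero x⟩

lemma eq_q_height_of_mem_threadSegment {c : CantorFanSpace} (hc : c ∈ threadSegment x m) :
    c = q (x, height c) := by
  obtain ⟨u, -, rfl⟩ := hc
  rfl

lemma threadSegment_eq_range : threadSegment x m = range fun w : I => q (x, m * w) := by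
  refine Subset.antisymm ?_ (range_subset_iff.2 fun w => q_mem_threadSegment mul_le_left)
  rintro _ ⟨u, hu, rfl⟩
  rcases eq_or_ne m 0 with rfl | hm
  · exact ⟨0, by simp only [le_antisymm hu nonneg', mul_zero]⟩
  · refine ⟨⟨u / m, div_mem (nonneg u) (nonneg m) hu⟩, congrArg (fun w => q (x, w)) ?_⟩
    exact Subtype.ext (mul_div_cancel₀ (u : ℝ) (coe_ne_zero.2 hm))

lemma injective_q_mul (hm : m ≠ 0) : Injective fun w : I => q (x, m * w) := by
  intro w w' h
  have hm' : (m : ℝ) ≠ 0 := coe_ne_zero.2 hm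
  rcases q_eq_q_iff.1 h with h | ⟨h, h'⟩
  · exact Subtype.ext (mul_left_cancel₀ hm' (congrArg (fun p : Fence => (p.2 : ℝ)) h))
  · rw [mul_eq_zero] at h h'
    rw [h.resolve_left hm, h'.resolve_left hm]

lemma continuous_q_mul : Continuous fun w : I => q (x, m * w) :=
  continuous_q.comp (continuous_const.prodMk (continuous_const.mul continuous_id))

lemma isArc_threadSegment (hm : m ≠ 0) : IsArc (threadSegment x m) :=
  threadSegment_eq_range ▸ isArc_range continuous_q_mul (injective_q_mul hm)

lemma isEndpointOfArc_threadSegment_vtop (hm : m ≠ 0) :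
    IsEndpointOfArc (threadSegment x m) vtop := by
  have h := isEndpointOfArc_range_zero continuous_q_mul (injective_q_mul (x := x) hm)
  rwa [← threadSegment_eq_range, mul_zero, q_zero] at h

lemma isEndpointOfArc_threadSegment_top (hm : m ≠ 0) :
    IsEndpointOfArc (threadSegment x m) (q (x, m)) := by
  have h := isEndpointOfArc_range_one continuous_q_mul (injective_q_mul (x := x) hm)
  rwa [← threadSegment_eq_range, mul_one] at h

lemma threadSegment_subset_of_vtop_mem {A : Set CantorFanSpace} (hv : vtop ∈ A) :
    threadSegment x 0 ⊆ A := by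
  rintro _ ⟨u, hu, rfl⟩
  change q (x, u) ∈ A
  rwa [le_antisymm hu nonneg', q_zero]

lemma _root_.IsEndpointOfArc.eq_q_height {A : Set CantorFanSpace} (hA : IsEndpointOfArc A vtop)
    (hx : q (x, t) ∈ A) (ht : t ≠ 0) {c : CantorFanSpace} (hc : c ∈ A) : c = q (x, height c) := by
  by_cases hcv : c = vtop
  · rw [hcv]
    exact (q_zero x).symm
  exact eq_q_height_of_isPreconnected hA.isPreconnected_diff (fun h => h.2 rfl)
    ⟨hx, mt q_eq_vtop_iff.1 ht⟩ ⟨hc, hcv⟩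

lemma _root_.IsEndpointOfArc.threadSegment_subset {A : Set CantorFanSpace}
    (hA : IsEndpointOfArc A vtop) (hx : q (x, t) ∈ A) : threadSegment x t ⊆ A := by
  rcases eq_or_ne t 0 with rfl | ht
  · exact threadSegment_subset_of_vtop_mem hA.mem
  rintro _ ⟨u, hu, rfl⟩
  have hheight := hA.isPreconnected.image height continuous_height.continuousOn
  obtain ⟨c, hc, rfl⟩ := hheight.Icc_subset ⟨vtop, hA.mem, rfl⟩ ⟨_, hx, rfl⟩ ⟨nonneg', hu⟩
  exact (hA.eq_q_height hx ht hc).symm ▸ hc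

lemma _root_.IsArcwiseConnected.threadSegment_subset {J : Set CantorFanSpace}
    (hJ : IsArcwiseConnected J) (hv : vtop ∈ J) (hx : q (x, t) ∈ J) : threadSegment x t ⊆ J := by
  rcases eq_or_ne t 0 with rfl | ht
  · exact threadSegment_subset_of_vtop_mem hv
  obtain ⟨A, hAJ, -, hAv, hAx⟩ := hJ vtop hv _ hx (Ne.symm (mt q_eq_vtop_iff.1 ht))
  exact (hAv.threadSegment_subset hAx.mem).trans hAJ

lemma isEndpoint_q_of_isGreatest {J : Set CantorFanSpace}
    (hmax : IsGreatest {u | q (x, u) ∈ J} m) (hm : m ≠ 0) : IsEndpoint J (q (x, m)) := by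
  refine ⟨hmax.1, fun B hBJ hB he => ?_⟩
  obtain ⟨f, hf, hinj, rfl⟩ := hB.exists_param
  obtain ⟨u₀, hu₀⟩ := he
  rcases eq_or_ne u₀ 0 with rfl | h0
  · exact hu₀ ▸ isEndpointOfArc_range_zero hf hinj
  rcases eq_or_ne u₀ 1 with rfl | h1
  · exact hu₀ ▸ isEndpointOfArc_range_one hf hinj
  exfalso
  have hnhds : f ⁻¹' {vtop}ᶜ ∈ 𝓝 u₀ := (isOpen_compl_singleton.preimage hf).mem_nhds <| by
    simpa [hu₀, q_eq_vtop_iff] using hm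
  obtain ⟨a, b, ⟨hau, hub⟩, hab⟩ := (mem_nhds_iff_exists_Ioo_subset'
    ⟨0, unitInterval.pos_iff_ne_zero.2 h0⟩ ⟨1, unitInterval.lt_one_iff_ne_one.2 h1⟩).1 hnhds
  -- near `u₀` the arc stays on the thread `x`, where its height is injective and at most `m`
  have hthread : ∀ w ∈ Ioo a b, f w = q (x, height (f w)) := fun w hw =>
    eq_q_height_of_isPreconnected (isPreconnected_Ioo.image f hf.continuousOn)
      (fun ⟨w', hw', h⟩ => hab hw' h) ⟨u₀, ⟨hau, hub⟩, hu₀⟩ ⟨w, hw, rfl⟩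
  have hle : ∀ w ∈ Ioo a b, height (f w) ≤ m := fun w hw =>
    hmax.2 (show q (x, height (f w)) ∈ J from hthread w hw ▸ hBJ (mem_range_self w))
  have hinjOn : InjOn (height ∘ f) (Ioo a b) := fun w hw w' hw' h =>
    hinj (by rw [hthread w hw, hthread w' hw']; exact congrArg (fun u => q (x, u)) h)
  have hfu₀ : height (f u₀) = m := by rw [hu₀, height_q]
  rcases (continuous_height.comp hf).continuousOn.strictMonoOn_of_injOn_Ioo (hau.trans hub)
    hinjOn with hmono | hanti
  · obtain ⟨w, hu₀w, hwb⟩ := exists_between hub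
    exact (hmono ⟨hau, hub⟩ ⟨hau.trans hu₀w, hwb⟩ hu₀w).not_ge
      ((hle w ⟨hau.trans hu₀w, hwb⟩).trans_eq hfu₀.symm)
  · obtain ⟨w, haw, hwu₀⟩ := exists_between hau
    exact (hanti ⟨haw, hwu₀.trans hub⟩ ⟨hau, hub⟩ hwu₀).not_ge
      ((hle w ⟨haw, hwu₀.trans hub⟩).trans_eq hfu₀.symm)

lemma le_of_isEndpoint {J : Set CantorFanSpace} (hJ : IsArcwiseConnected J) (hv : vtop ∈ J)
    (he : IsEndpoint J (q (x, m))) (hm : m ≠ 0) {w : I} (hw : q (x, w) ∈ J) : w ≤ m := by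
  by_contra! hmw
  have hend := he.2 _ (hJ.threadSegment_subset hv hw)
    (isArc_threadSegment (nonneg'.trans_lt hmw).ne') (q_mem_threadSegment hmw.le)
  -- `q (x, m)` would cut the segment `threadSegment x w` into heights below and above `m`
  have hheight := hend.isPreconnected_diff.image height continuous_height.continuousOn
  obtain ⟨c, ⟨hc, hcm⟩, hc'⟩ := hheight.Icc_subset
    ⟨vtop, ⟨vtop_mem_threadSegment, fun h => hm (congrArg height h).symm⟩, rfl⟩
    ⟨q (x, w), ⟨q_mem_threadSegment le_rfl, fun h => hmw.ne' (congrArg height h)⟩, rfl⟩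
    ⟨nonneg', hmw.le⟩
  exact hcm (by rw [eq_q_height_of_mem_threadSegment hc, hc', mem_singleton_iff])

lemma exists_isGreatest_of_isClosed {J : Set CantorFanSpace} (hJ : IsClosed J)
    (hx : q (x, t) ∈ J) : ∃ m, IsGreatest {u | q (x, u) ∈ J} m :=
  (hJ.preimage (continuous_q.comp (Continuous.prodMk_right x))).isCompact.exists_isGreatest ⟨t, hx⟩

lemma threadSegment_mem_legs {J : Set CantorFanSpace} (hJ : IsArcwiseConnected J)
    (hv : vtop ∈ J) (hmax : IsGreatest {u | q (x, u) ∈ J} m) (hm : m ≠ 0) :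
    threadSegment x m ∈ Legs J vtop :=
  ⟨_, isEndpoint_q_of_isGreatest hmax hm, hJ.threadSegment_subset hv hmax.1,
    Or.inr ⟨fun h => hm (congrArg height h).symm, isArc_threadSegment hm,
      isEndpointOfArc_threadSegment_vtop hm, isEndpointOfArc_threadSegment_top hm⟩⟩

lemma eq_q_height_of_forall_legs {J : Set CantorFanSpace} (hJ : IsFanWithTop J vtop)
    {r : CantorFanSpace → CantorFanSpace} (hr : ∀ A ∈ Legs J vtop, r '' A ⊆ A)
    (hrv : r vtop = vtop) (hx : q (x, t) ∈ J) : r (q (x, t)) = q (x, height (r (q (x, t)))) := by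
  rcases eq_or_ne t 0 with rfl | ht
  · rw [q_zero, hrv]
    exact (q_zero x).symm
  obtain ⟨m, hmax⟩ := exists_isGreatest_of_isClosed hJ.1.1.1.1.isClosed hx
  have hm : m ≠ 0 := (unitInterval.pos_iff_ne_zero.2 ht |>.trans_le (hmax.2 hx)).ne'
  exact eq_q_height_of_mem_threadSegment <| hr _ (threadSegment_mem_legs hJ.1.1.2.1 hJ.2.1 hmax hm)
    (mem_image_of_mem r (q_mem_threadSegment (hmax.2 hx)))

lemma image_subset_of_lift {J K : Set CantorFanSpace} (hJ : IsFanWithTop J vtop) (hvK : vtop ∈ K)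
    {r : CantorFanSpace → CantorFanSpace} (hrJ : MapsTo r J J) (hrv : r vtop = vtop)
    {R : Fence → Fence} (hRc : ContinuousOn R (FFence J)) (hRid : EqOn R id (FFence K))
    (hRq : ∀ z ∈ FFence J, q (R z) = r (q z)) {A : Set CantorFanSpace} (hA : A ∈ Legs J vtop) :
    r '' A ⊆ A := by
  obtain ⟨e, he, hAJ, ⟨-, rfl⟩ | ⟨hne, -, hAv, hAe⟩⟩ := hA
  · rintro _ ⟨_, rfl, rfl⟩
    exact hrv
  obtain ⟨⟨x, me⟩, rfl⟩ := q_surjective e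
  have hme : me ≠ 0 := fun h => hne (q_eq_vtop_iff.2 h).symm
  rintro _ ⟨c, hc, rfl⟩
  obtain ⟨u, rfl⟩ : ∃ u, c = q (x, u) := ⟨_, hAv.eq_q_height hAe.mem hme hc⟩
  have hfst : (R (x, u)).1 = x := fst_eq_of_continuousOn hRc
    (fun w hw => hAJ (hAv.threadSegment_subset hc (q_mem_threadSegment hw)))
    (congrArg Prod.fst (hRid (show q (x, 0) ∈ K from (q_zero x).symm ▸ hvK)))
  have hrc : r (q (x, u)) = q (x, (R (x, u)).2) := by
    rw [← hRq _ (hAJ hc)]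
    exact congrArg q (Prod.ext hfst rfl)
  rw [hrc]
  exact hAv.threadSegment_subset hAe.mem <| q_mem_threadSegment <|
    le_of_isEndpoint hJ.1.1.2.1 hJ.2.1 he hme (hrc ▸ hrJ (hAJ hc))

end CantorFan

open CantorFan

/-- a retraction `r : J → K` between fans in the Cantor fan is simple
(maps every leg of `J` into itself) iff it lifts to a retraction `R : F_J → F_K`
of the fences with `q ∘ R = r ∘ q` on `F_J`. -/
theorem stmt17 (J K : Set CantorFanSpace)
    (hJ : IsFanWithTop J vtop) (hK : IsFanWithTop K vtop) (hKJ : K ⊆ J)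
    (r : CantorFanSpace → CantorFanSpace)
    (hr : ContinuousOn r J) (hm : Set.MapsTo r J K) (hid : Set.EqOn r id K) :
    (∀ A ∈ Legs J vtop, r '' A ⊆ A) ↔
      ∃ R : Fence → Fence, ContinuousOn R (FFence J) ∧
        Set.MapsTo R (FFence J) (FFence K) ∧ Set.EqOn R id (FFence K) ∧
        ∀ x ∈ FFence J, q (R x) = r (q x) := by
  have hrv : r vtop = vtop := hid hK.2.1
  refine ⟨fun hsimple => ?_, fun ⟨R, hRc, _, hRid, hRq⟩ _ hA =>
    image_subset_of_lift hJ hK.2.1 (fun _ hz => hKJ (hm hz)) hrv hRc hRid hRq hA⟩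
  have hthread : ∀ z ∈ FFence J, r (q z) = q (z.1, height (r (q z))) :=
    fun _ hz => eq_q_height_of_forall_legs hJ hsimple hrv hz
  refine ⟨fun z => (z.1, height (r (q z))), ?_, fun z hz => ?_, fun z hz => ?_,
    fun z hz => (hthread z hz).symm⟩
  · exact continuousOn_fst.prodMk
      (continuous_height.comp_continuousOn (hr.comp continuous_q.continuousOn fun _ hz => hz))
  · change q _ ∈ K
    rw [← hthread z hz]
    exact hm hz
  · change (z.1, height (r (q z))) = z
    rw [hid hz]
    rfl
end
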